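/- The group of ℝ-algebra automorphisms of A = ℝ[X,Y]/⟨X²,Y²⟩ has exactly eight connected components (in the Euclidean topology induced from its embedding into the space of 3×3 real matrices via the action on 𝔫). -/

import Mathlib

/-
An automorphism φ must send X and Y to square-zero elements of 𝔫; since
(aX + bY + cXY)² = 2ab·XY, this forces (φX, φY) = (aX + cXY, eY + fXY) or (aY + cXY, eX + fXY),
and φ(XY) = ae·XY with ae ≠ 0 by injectivity. Conversely all of these are automorphisms. So
Aut(A) is two copies of (ℝ ∖ 0)² × ℝ², and its components are labelled by the type of φ and the
signs of a and e. These three labels are locally constant on Aut(A), and each of the eight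
fibres is the continuous image of a convex set.
-/

/-- The Weil algebra `A = ℝ[X,Y]/⟨X², Y²⟩`. -/
noncomputable abbrev WA : Type :=
  MvPolynomial (Fin 2) ℝ ⧸
    Ideal.span {(MvPolynomial.X 0 : MvPolynomial (Fin 2) ℝ) ^ 2, (MvPolynomial.X 1) ^ 2}

noncomputable def wx : WA := Ideal.Quotient.mk _ (MvPolynomial.X 0)
noncomputable def wy : WA := Ideal.Quotient.mk _ (MvPolynomial.X 1)

/-- The image of `Aut(A)` in the space of `3 × 3` real matrices, via the action of an
automorphism on the nilpotent ideal `𝔫` with basis `{X, Y, XY}` (rows record the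
coordinates of the images of `X`, `Y`, `XY`). -/
def autMatrices : Set (Matrix (Fin 3) (Fin 3) ℝ) :=
  {M | ∃ φ : WA ≃ₐ[ℝ] WA,
    φ wx = M 0 0 • wx + M 0 1 • wy + M 0 2 • (wx * wy) ∧
    φ wy = M 1 0 • wx + M 1 1 • wy + M 1 2 • (wx * wy) ∧
    φ (wx * wy) = M 2 0 • wx + M 2 1 • wy + M 2 2 • (wx * wy)}

open Set

lemma mul_eq_of_mul_self_eq_zero {B : Type*} [CommRing B] [Algebra ℝ B] {x y : B}
    (hx : x * x = 0) (hy : y * y = 0) (a b c a' b' c' : ℝ) :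
    (a • x + b • y + c • (x * y)) * (a' • x + b' • y + c' • (x * y)) =
      (a * b' + b * a') • (x * y) := by
  simp only [Algebra.smul_def, map_mul, map_add]
  generalize algebraMap ℝ B a = p, algebraMap ℝ B b = q, algebraMap ℝ B c = r,
    algebraMap ℝ B a' = p', algebraMap ℝ B b' = q', algebraMap ℝ B c' = r'
  linear_combination (p * p' + (p * r' + r * p') * y + r * r' * y * y) * hx +
    (q * q' + (q * r' + r * q') * x) * hy

lemma continuous_decide_lt {X α : Type*} [TopologicalSpace X] [TopologicalSpace α] [LinearOrder α]
    [OrderClosedTopology α] {g h : X → α} (hg : Continuous g) (hh : Continuous h)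
    (hne : ∀ x, g x ≠ h x) : Continuous fun x => decide (g x < h x) := by
  rw [continuous_discrete_rng]
  rintro (_ | _)
  · convert isOpen_lt hh hg using 1
    ext x
    simpa using (hne x).symm.le_iff_lt
  · convert isOpen_lt hg hh using 1
    ext x
    simp

theorem natCard_connectedComponents_eq {X Y : Type*} [TopologicalSpace X] [TopologicalSpace Y]
    [TotallyDisconnectedSpace Y] {f : X → Y} (hf : Continuous f) (hsurj : Function.Surjective f)
    (hfib : ∀ y, IsPreconnected (f ⁻¹' {y})) : Nat.card (ConnectedComponents X) = Nat.card Y := by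
  refine Nat.card_congr (Equiv.ofBijective hf.connectedComponentsLift ⟨?_, ?_⟩)
  · intro x x' hxx'
    obtain ⟨x, rfl⟩ := ConnectedComponents.surjective_coe x
    obtain ⟨x', rfl⟩ := ConnectedComponents.surjective_coe x'
    rw [hf.connectedComponentsLift_apply_coe, hf.connectedComponentsLift_apply_coe] at hxx'
    rw [ConnectedComponents.coe_eq_coe']
    exact (hfib (f x')).subset_connectedComponent rfl hxx'
  · intro y
    obtain ⟨x, rfl⟩ := hsurj y
    exact ⟨x, hf.connectedComponentsLift_apply_coe x⟩

namespace WA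

open MvPolynomial

variable {B : Type*} [CommRing B] [Algebra ℝ B]

noncomputable def lift (p q : B) (hp : p * p = 0) (hq : q * q = 0) : WA →ₐ[ℝ] B :=
  Ideal.Quotient.liftₐ _ (aeval ![p, q]) fun r hr => by
    have hle : Ideal.span {(X 0 : MvPolynomial (Fin 2) ℝ) ^ 2, X 1 ^ 2} ≤
        RingHom.ker (aeval ![p, q] : MvPolynomial (Fin 2) ℝ →ₐ[ℝ] B) := by
      rw [Ideal.span_le]
      rintro _ (rfl | rfl) <;> simp [sq, hp, hq]
    exact hle hr

@[simp] lemma lift_wx (p q : B) (hp : p * p = 0) (hq : q * q = 0) : lift p q hp hq wx = p := by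
  change aeval ![p, q] (X 0) = p
  simp

@[simp] lemma lift_wy (p q : B) (hp : p * p = 0) (hq : q * q = 0) : lift p q hp hq wy = q := by
  change aeval ![p, q] (X 1) = q
  simp

lemma algHom_ext {f g : WA →ₐ[ℝ] B} (hx : f wx = g wx) (hy : f wy = g wy) : f = g := by
  apply Ideal.Quotient.algHom_ext
  apply MvPolynomial.algHom_ext
  intro i
  fin_cases i
  exacts [hx, hy]

end WA

lemma wx_mul_self : wx * wx = 0 := by
  rw [wx, ← map_mul, ← sq, Ideal.Quotient.eq_zero_iff_mem]
  exact Ideal.subset_span (by simp)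

lemma wy_mul_self : wy * wy = 0 := by
  rw [wy, ← map_mul, ← sq, Ideal.Quotient.eq_zero_iff_mem]
  exact Ideal.subset_span (by simp)

noncomputable def nilVec (a b c : ℝ) : WA := a • wx + b • wy + c • (wx * wy)

open TrivSqZeroExt DualNumber in
@[simp] lemma nilVec_inj {a b c a' b' c' : ℝ} :
    nilVec a b c = nilVec a' b' c' ↔ a = a' ∧ b = b' ∧ c = c' := by
  refine ⟨fun h => ?_, by rintro ⟨rfl, rfl, rfl⟩; rfl⟩
  -- `X ↦ ε₁, Y ↦ ε₂` embeds `A` into `ℝ[ε₁][ε₂]`, whose components separate the coordinates.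
  let toDual : WA →ₐ[ℝ] DualNumber (DualNumber ℝ) :=
    WA.lift (inl ε : DualNumber (DualNumber ℝ)) ε (by rw [← inl_mul, eps_mul_eps, inl_zero])
      eps_mul_eps
  have hd := congrArg toDual h
  simp only [nilVec, map_add, map_smul, map_mul, toDual, WA.lift_wx, WA.lift_wy] at hd
  simpa [TrivSqZeroExt.ext_iff] using hd

lemma wx_eq_nilVec : wx = nilVec 1 0 0 := by simp [nilVec]

lemma wy_eq_nilVec : wy = nilVec 0 1 0 := by simp [nilVec]

lemma wx_mul_wy_eq_nilVec : wx * wy = nilVec 0 0 1 := by simp [nilVec]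

@[simp] lemma nilVec_zero : nilVec 0 0 0 = 0 := by simp [nilVec]

@[simp] lemma nilVec_eq_zero_iff {a b c : ℝ} : nilVec a b c = 0 ↔ a = 0 ∧ b = 0 ∧ c = 0 := by
  rw [← nilVec_zero, nilVec_inj]

lemma nilVec_mul (a b c a' b' c' : ℝ) :
    nilVec a b c * nilVec a' b' c' = nilVec 0 0 (a * b' + b * a') := by
  simp [nilVec, mul_eq_of_mul_self_eq_zero wx_mul_self wy_mul_self]

lemma nilVec_mul_self_eq_zero {a b c : ℝ} (h : a * b = 0) : nilVec a b c * nilVec a b c = 0 := by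
  rw [nilVec_mul, mul_comm b a, h, add_zero, nilVec_zero]

noncomputable def nilHom (a b c a' b' c' : ℝ) (h : a * b = 0) (h' : a' * b' = 0) : WA →ₐ[ℝ] WA :=
  WA.lift (nilVec a b c) (nilVec a' b' c') (nilVec_mul_self_eq_zero h) (nilVec_mul_self_eq_zero h')

lemma nilHom_nilVec {a b c a' b' c' : ℝ} (h : a * b = 0) (h' : a' * b' = 0) (x y z : ℝ) :
    nilHom a b c a' b' c' h h' (nilVec x y z) =
      nilVec (x * a + y * a') (x * b + y * b') (x * c + y * c' + z * (a * b' + b * a')) := by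
  conv_lhs => rw [nilVec, map_add, map_add, map_smul, map_smul, map_smul, map_mul]
  simp only [nilHom, WA.lift_wx, WA.lift_wy, nilVec_mul]
  simp only [nilVec]
  module

noncomputable def diagAut (a e c f : ℝ) (ha : a ≠ 0) (he : e ≠ 0) : WA ≃ₐ[ℝ] WA :=
  AlgEquiv.ofAlgHom (nilHom a 0 c 0 e f (mul_zero a) (zero_mul e))
    (nilHom a⁻¹ 0 (-c / (a ^ 2 * e)) 0 e⁻¹ (-f / (a * e ^ 2)) (mul_zero _) (zero_mul _))
    (by apply WA.algHom_ext <;> simp [wx_eq_nilVec, wy_eq_nilVec, nilHom_nilVec] <;>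
      field_simp <;> simp)
    (by apply WA.algHom_ext <;> simp [wx_eq_nilVec, wy_eq_nilVec, nilHom_nilVec] <;>
      field_simp <;> simp)

noncomputable def swapAut (a e c f : ℝ) (ha : a ≠ 0) (he : e ≠ 0) : WA ≃ₐ[ℝ] WA :=
  AlgEquiv.ofAlgHom (nilHom 0 a c e 0 f (zero_mul a) (mul_zero e))
    (nilHom 0 e⁻¹ (-f / (a * e ^ 2)) a⁻¹ 0 (-c / (a ^ 2 * e)) (zero_mul _) (mul_zero _))
    (by apply WA.algHom_ext <;> simp [wx_eq_nilVec, wy_eq_nilVec, nilHom_nilVec] <;>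
      field_simp <;> simp)
    (by apply WA.algHom_ext <;> simp [wx_eq_nilVec, wy_eq_nilVec, nilHom_nilVec] <;>
      field_simp <;> simp)

lemma mem_autMatrices_iff {M : Matrix (Fin 3) (Fin 3) ℝ} :
    M ∈ autMatrices ↔ ∃ φ : WA ≃ₐ[ℝ] WA, φ wx = nilVec (M 0 0) (M 0 1) (M 0 2) ∧
      φ wy = nilVec (M 1 0) (M 1 1) (M 1 2) ∧ φ (wx * wy) = nilVec (M 2 0) (M 2 1) (M 2 2) :=
  Iff.rfl

def autMat (σ : Bool) (a e c f : ℝ) : Matrix (Fin 3) (Fin 3) ℝ :=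
  if σ then !![0, a, c; e, 0, f; 0, 0, a * e] else !![a, 0, c; 0, e, f; 0, 0, a * e]

lemma autMat_mem_autMatrices (σ : Bool) {a e : ℝ} (c f : ℝ) (ha : a ≠ 0) (he : e ≠ 0) :
    autMat σ a e c f ∈ autMatrices := by
  rw [mem_autMatrices_iff]
  cases σ
  · refine ⟨diagAut a e c f ha he, ?_, ?_, ?_⟩ <;>
      simp [autMat, diagAut, wx_eq_nilVec, wy_eq_nilVec, nilHom_nilVec, nilVec_mul]
  · refine ⟨swapAut a e c f ha he, ?_, ?_, ?_⟩ <;>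
      simp [autMat, swapAut, wx_eq_nilVec, wy_eq_nilVec, nilHom_nilVec, nilVec_mul]

lemma entries_of_mem_autMatrices {M : Matrix (Fin 3) (Fin 3) ℝ} (hM : M ∈ autMatrices) :
    M 0 0 * M 0 1 = 0 ∧ M 1 0 * M 1 1 = 0 ∧ M 2 0 = 0 ∧ M 2 1 = 0 ∧
      M 2 2 = M 0 0 * M 1 1 + M 0 1 * M 1 0 ∧ M 2 2 ≠ 0 := by
  obtain ⟨φ, hx, hy, hxy⟩ := mem_autMatrices_iff.1 hM
  have hxx := congrArg φ wx_mul_self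
  have hyy := congrArg φ wy_mul_self
  rw [map_mul, hx, nilVec_mul, map_zero, nilVec_eq_zero_iff] at hxx
  rw [map_mul, hy, nilVec_mul, map_zero, nilVec_eq_zero_iff] at hyy
  rw [map_mul, hx, hy, nilVec_mul, nilVec_inj] at hxy
  obtain ⟨h20, h21, h22⟩ := hxy
  refine ⟨by linarith [hxx.2.2], by linarith [hyy.2.2], h20.symm, h21.symm, h22.symm, ?_⟩
  intro h0
  have : φ (wx * wy) = φ 0 := by
    rw [map_mul, hx, hy, nilVec_mul, h22, h0, map_zero, nilVec_zero]
  simpa [wx_mul_wy_eq_nilVec] using φ.injective this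

lemma exists_autMat_eq {M : Matrix (Fin 3) (Fin 3) ℝ} (h0 : M 0 0 * M 0 1 = 0)
    (h1 : M 1 0 * M 1 1 = 0) (h20 : M 2 0 = 0) (h21 : M 2 1 = 0)
    (h22 : M 2 2 = M 0 0 * M 1 1 + M 0 1 * M 1 0) (hdet : M 2 2 ≠ 0) :
    ∃ σ a e c f, a ≠ 0 ∧ e ≠ 0 ∧ autMat σ a e c f = M := by
  rcases mul_eq_zero.1 h0 with h00 | h01
  · rw [h00, zero_mul, zero_add] at h22
    have h01 : M 0 1 ≠ 0 := fun h => hdet (by rw [h22, h, zero_mul])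
    have h10 : M 1 0 ≠ 0 := fun h => hdet (by rw [h22, h, mul_zero])
    have h11 : M 1 1 = 0 := (mul_eq_zero.1 h1).resolve_left h10
    refine ⟨true, M 0 1, M 1 0, M 0 2, M 1 2, h01, h10, ?_⟩
    ext i j
    fin_cases i <;> fin_cases j <;> simp [autMat, *]
  · rw [h01, zero_mul, add_zero] at h22
    have h00 : M 0 0 ≠ 0 := fun h => hdet (by rw [h22, h, zero_mul])
    have h11 : M 1 1 ≠ 0 := fun h => hdet (by rw [h22, h, mul_zero])
    have h10 : M 1 0 = 0 := (mul_eq_zero.1 h1).resolve_right h11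
    refine ⟨false, M 0 0, M 1 1, M 0 2, M 1 2, h00, h11, ?_⟩
    ext i j
    fin_cases i <;> fin_cases j <;> simp [autMat, *]

theorem mem_autMatrices_iff_exists_autMat {M : Matrix (Fin 3) (Fin 3) ℝ} :
    M ∈ autMatrices ↔ ∃ σ a e c f, a ≠ 0 ∧ e ≠ 0 ∧ autMat σ a e c f = M := by
  refine ⟨fun hM => ?_, ?_⟩
  · obtain ⟨h0, h1, h20, h21, h22, hdet⟩ := entries_of_mem_autMatrices hM
    exact exists_autMat_eq h0 h1 h20 h21 h22 hdet
  · rintro ⟨σ, a, e, c, f, ha, he, rfl⟩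
    exact autMat_mem_autMatrices σ c f ha he

/-- On `autMatrices` exactly one of `M 0 0`, `M 0 1` is nonzero, so the first entry detects the
swap type; the others are the signs of `a` and `e` in `autMat σ a e c f`. -/
noncomputable def autType (M : Matrix (Fin 3) (Fin 3) ℝ) : Bool × Bool × Bool :=
  (decide (M 0 0 ^ 2 < M 0 1 ^ 2), decide (M 0 0 + M 0 1 < 0), decide (M 1 0 + M 1 1 < 0))

lemma autType_autMat (σ : Bool) {a e : ℝ} (c f : ℝ) (ha : a ≠ 0) :
    autType (autMat σ a e c f) = (σ, decide (a < 0), decide (e < 0)) := by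
  cases σ <;> simp [autType, autMat, sq_nonneg, sq_pos_of_ne_zero ha]

lemma continuous_autType_comp_val : Continuous fun M : autMatrices => autType M := by
  have hne : ∀ M ∈ autMatrices,
      M 0 0 ^ 2 ≠ M 0 1 ^ 2 ∧ M 0 0 + M 0 1 ≠ 0 ∧ M 1 0 + M 1 1 ≠ 0 := by
    intro M hM
    obtain ⟨σ, a, e, c, f, ha, he, rfl⟩ := mem_autMatrices_iff_exists_autMat.1 hM
    cases σ <;> simp [autMat, ha, he, (sq_pos_of_ne_zero ha).ne]
  have hent (i j : Fin 3) : Continuous fun M : autMatrices => (M : Matrix (Fin 3) (Fin 3) ℝ) i j :=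
    (continuous_apply j).comp ((continuous_apply i).comp continuous_subtype_val)
  exact .prodMk
    (continuous_decide_lt ((hent 0 0).pow 2) ((hent 0 1).pow 2) fun M => (hne M.1 M.2).1)
    (.prodMk (continuous_decide_lt ((hent 0 0).add (hent 0 1)) continuous_const
        fun M => (hne M.1 M.2).2.1)
      (continuous_decide_lt ((hent 1 0).add (hent 1 1)) continuous_const
        fun M => (hne M.1 M.2).2.2))

def halfLine (s : Bool) : Set ℝ := if s then Iio 0 else Ioi 0

lemma mem_halfLine {s : Bool} {a : ℝ} : a ∈ halfLine s ↔ a ≠ 0 ∧ decide (a < 0) = s := by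
  cases s
  · simp only [halfLine, Bool.false_eq_true, ↓reduceIte, mem_Ioi, decide_eq_false_iff_not, not_lt]
    exact ⟨fun h => ⟨h.ne', h.le⟩, fun h => lt_of_le_of_ne h.2 h.1.symm⟩
  · simpa [halfLine] using fun h : a < 0 => h.ne

lemma convex_halfLine (s : Bool) : Convex ℝ (halfLine s) := by
  cases s
  exacts [convex_Ioi 0, convex_Iio 0]

lemma halfLine_nonempty (s : Bool) : (halfLine s).Nonempty := by
  cases s
  exacts [⟨1, by simp [halfLine]⟩, ⟨-1, by simp [halfLine]⟩]

lemma continuous_autMat (σ : Bool) :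
    Continuous fun p : ℝ × ℝ × ℝ × ℝ => autMat σ p.1 p.2.1 p.2.2.1 p.2.2.2 := by
  cases σ <;> simp only [autMat, Bool.false_eq_true, if_false, if_true] <;> fun_prop

lemma autMatrices_inter_autType_preimage (σ s t : Bool) :
    autMatrices ∩ autType ⁻¹' {(σ, s, t)} =
      (fun p : ℝ × ℝ × ℝ × ℝ => autMat σ p.1 p.2.1 p.2.2.1 p.2.2.2) ''
        (halfLine s ×ˢ halfLine t ×ˢ univ) := by
  ext M
  constructor
  · rintro ⟨hM, hT⟩
    obtain ⟨σ', a, e, c, f, ha, he, rfl⟩ := mem_autMatrices_iff_exists_autMat.1 hM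
    obtain ⟨rfl, rfl, rfl⟩ : σ' = σ ∧ decide (a < 0) = s ∧ decide (e < 0) = t := by
      simpa [autType_autMat σ' c f ha] using hT
    exact ⟨(a, e, c, f), ⟨mem_halfLine.2 ⟨ha, rfl⟩, mem_halfLine.2 ⟨he, rfl⟩, trivial⟩, rfl⟩
  · rintro ⟨⟨a, e, c, f⟩, ⟨has, het, -⟩, rfl⟩
    obtain ⟨ha, rfl⟩ := mem_halfLine.1 has
    obtain ⟨he, rfl⟩ := mem_halfLine.1 het
    exact ⟨autMat_mem_autMatrices σ c f ha he, autType_autMat σ c f ha⟩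

lemma autType_comp_val_surjective :
    Function.Surjective fun M : autMatrices => autType M := by
  rintro ⟨σ, s, t⟩
  obtain ⟨M, hM, hT⟩ : (autMatrices ∩ autType ⁻¹' {(σ, s, t)}).Nonempty := by
    rw [autMatrices_inter_autType_preimage]
    exact ((halfLine_nonempty s).prod ((halfLine_nonempty t).prod univ_nonempty)).image _
  exact ⟨⟨M, hM⟩, hT⟩

lemma isPreconnected_autType_comp_val_preimage (y : Bool × Bool × Bool) :
    IsPreconnected ((fun M : autMatrices => autType M) ⁻¹' {y}) := by
  obtain ⟨σ, s, t⟩ := y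
  change IsPreconnected (Subtype.val ⁻¹' (autType ⁻¹' {(σ, s, t)}))
  rw [← Topology.IsInducing.subtypeVal.isPreconnected_image, Subtype.image_preimage_coe,
    autMatrices_inter_autType_preimage]
  exact ((convex_halfLine s).prod ((convex_halfLine t).prod convex_univ)).isPreconnected.image _
    (continuous_autMat σ).continuousOn

/-- The group of ℝ-algebra automorphisms of `A = ℝ[X,Y]/⟨X²,Y²⟩`, topologized via its
embedding into the `3 × 3` real matrices through its action on `𝔫`, has exactly eight
connected components. -/
theorem stmt4 : Nat.card (ConnectedComponents ↥autMatrices) = 8 := by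
  rw [natCard_connectedComponents_eq continuous_autType_comp_val autType_comp_val_surjective
    isPreconnected_autType_comp_val_preimage]
  simp
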